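/- arXiv:2310.11416 — 2 statements merged into one kernel-verified Lean document; each statement's English description precedes it below -/
import Mathlib

section
/- Let σ₁ > σ₂ > ... > σ_m > 0 and consider the lower-triangular cascade system ρ_i(x,t) solving ρ_{i,t} = σ_i ρ_{i,x} + Σ_{j<i} ω_{i,j}(x) ρ_j(x,t) on [0,1] with ρ_i(1,t) = 0, where ω_{i,j} are bounded continuous functions. Then every component ρ_i vanishes identically for t ≥ 1/σ_m; i.e., the whole state converges to zero in finite time 1/σ_m. -/
/-!
A single transport equation `u_t = σ u_x` with `u(1, ·) = 0` forces `u = 0` on the region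
`1 - x ≤ σ t` reached by characteristics leaving the boundary `x = 1`. Since only the separate
partial derivatives of `u` are available, we argue by a maximum principle with exponential
barriers instead of following characteristics. In the cascade, component `i` satisfies such
an equation on its own region, because every `ρ_j` with `j < i` has speed `σ_j ≥ σ_i` and so
already vanishes there; by induction all components vanish once `σ_m t ≥ 1`.
-/

open Set Filter Topology Real

theorem IsLocalMaxOn.hasDerivAt_nonpos_of_Ici {f : ℝ → ℝ} {f' a : ℝ}
    (h : IsLocalMaxOn f (Ici a) a) (hf : HasDerivAt f f' a) : f' ≤ 0 := by
  have hseg : segment ℝ a (a + 1) ⊆ Ici a := by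
    rw [segment_eq_Icc (by linarith)]
    exact Icc_subset_Ici_self
  simpa using h.hasFDerivWithinAt_nonpos hf.hasFDerivAt.hasFDerivWithinAt
    (mem_posTangentConeAt_of_segment_subset hseg)

theorem IsLocalMaxOn.hasDerivAt_nonneg_of_Iic {f : ℝ → ℝ} {f' a : ℝ}
    (h : IsLocalMaxOn f (Iic a) a) (hf : HasDerivAt f f' a) : 0 ≤ f' := by
  have hseg : segment ℝ a (a + -1) ⊆ Iic a := by
    rw [segment_symm, segment_eq_Icc (by linarith)]
    exact Icc_subset_Iic_self
  simpa using h.hasFDerivWithinAt_nonpos hf.hasFDerivAt.hasFDerivWithinAt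
    (mem_posTangentConeAt_of_segment_subset hseg)

section Transport

variable {σ : ℝ} {u ux : ℝ → ℝ → ℝ}

/-- `B = M exp (K (1 - x - c t))` satisfies `B_t - σ B_x = K (σ - c) B > 0`, so `u - B` cannot
attain its maximum over the region where `B < M`; elsewhere `u ≤ M ≤ B`, and at `x = 1`, `u = 0`. -/
theorem transport_le_barrier (hu : Continuous fun p : ℝ × ℝ => u p.1 p.2)
    (hux : ∀ x ∈ Icc (0:ℝ) 1, ∀ t, 1 - x ≤ σ * t → HasDerivAt (u · t) (ux x t) x)
    (hut : ∀ x ∈ Icc (0:ℝ) 1, ∀ t, 1 - x ≤ σ * t → HasDerivAt (u x ·) (σ * ux x t) t)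
    (hb : ∀ t ≥ 0, u 1 t = 0) {c K M T : ℝ} (hcσ : c < σ) (hK : 0 < K) (hM : 0 < M)
    (huM : ∀ x ∈ Icc (0:ℝ) 1, ∀ t ∈ Icc 0 T, u x t ≤ M) :
    ∀ x ∈ Icc (0:ℝ) 1, ∀ t ∈ Icc 0 T, 1 - x ≤ σ * t → u x t ≤ M * exp (K * (1 - x - c * t)) := by
  set D : Set (ℝ × ℝ) := (Icc 0 1 ×ˢ Icc 0 T) ∩ {p | 1 - p.1 ≤ σ * p.2}
  set B : ℝ → ℝ → ℝ := fun x t => M * exp (K * (1 - x - c * t))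
  set F : ℝ × ℝ → ℝ := fun p => u p.1 p.2 - B p.1 p.2
  have hD : IsCompact D := (isCompact_Icc.prod isCompact_Icc).inter_right
    (isClosed_le (by fun_prop) (by fun_prop))
  have hF : Continuous F := hu.sub (by fun_prop)
  intro x hx t ht hxt
  obtain ⟨⟨x₁, t₁⟩, ⟨⟨hx₁, ht₁⟩, hxt₁⟩, hmax⟩ :=
    hD.exists_isMaxOn ⟨(x, t), ⟨hx, ht⟩, hxt⟩ hF.continuousOn
  change 1 - x₁ ≤ σ * t₁ at hxt₁
  have hB : 0 < B x₁ t₁ := by positivity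
  suffices F (x₁, t₁) ≤ 0 from
    sub_nonpos.mp ((hmax (show (x, t) ∈ D from ⟨⟨hx, ht⟩, hxt⟩)).trans this)
  by_cases hout : c * t₁ ≤ 1 - x₁
  · have : M ≤ B x₁ t₁ := le_mul_of_one_le_right hM.le (one_le_exp (by nlinarith))
    linarith [huM x₁ hx₁ t₁ ht₁]
  by_cases hx₁_eq : x₁ = 1
  · subst hx₁_eq
    simp only [F, hb t₁ ht₁.1]
    linarith
  exfalso
  replace hout : 1 - x₁ < c * t₁ := not_le.mp hout
  have hσt₁ : 1 - x₁ < σ * t₁ := hout.trans_le (by nlinarith [ht₁.1])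
  have hσ : 0 < σ := by nlinarith [hx₁.2, ht₁.1]
  have hBx : HasDerivAt (B · t₁) (-K * B x₁ t₁) x₁ :=
    (((((hasDerivAt_id x₁).const_sub 1).sub_const (c * t₁)).const_mul K).exp.const_mul
      M).congr_deriv (by simp only [B, id]; ring)
  have hBt : HasDerivAt (B x₁ ·) (-K * c * B x₁ t₁) t₁ :=
    (((((hasDerivAt_id t₁).const_mul c).const_sub (1 - x₁)).const_mul K).exp.const_mul
      M).congr_deriv (by simp only [B, id]; ring)
  have hdx : HasDerivAt (fun y => F (y, t₁)) (ux x₁ t₁ + K * B x₁ t₁) x₁ :=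
    ((hux x₁ hx₁ t₁ hxt₁).sub hBx).congr_deriv (by ring)
  have hdt : HasDerivAt (fun s => F (x₁, s)) (σ * ux x₁ t₁ + K * c * B x₁ t₁) t₁ :=
    ((hut x₁ hx₁ t₁ hxt₁).sub hBt).congr_deriv (by ring)
  have hmax_x : IsLocalMaxOn (fun y => F (y, t₁)) (Ici x₁) x₁ := by
    filter_upwards [Icc_mem_nhdsGE (lt_of_le_of_ne hx₁.2 hx₁_eq)] with y hy
    exact hmax ⟨⟨⟨hx₁.1.trans hy.1, hy.2⟩, ht₁⟩, show 1 - y ≤ σ * t₁ by linarith [hy.1]⟩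
  have hmax_t : IsLocalMaxOn (fun s => F (x₁, s)) (Iic t₁) t₁ := by
    have hev : ∀ᶠ s in 𝓝 t₁, 1 - x₁ < σ * s :=
      continuousAt_const.eventually_lt (by fun_prop) hσt₁
    filter_upwards [nhdsWithin_le_nhds hev, self_mem_nhdsWithin] with s hs hst
    have hs0 : 0 ≤ s := (pos_of_mul_pos_right (by linarith [hx₁.2]) hσ.le).le
    exact hmax ⟨⟨hx₁, hs0, hst.trans ht₁.2⟩, hs.le⟩
  have h1 := hmax_x.hasDerivAt_nonpos_of_Ici hdx
  have h2 := hmax_t.hasDerivAt_nonneg_of_Iic hdt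
  nlinarith [mul_pos hK hB]

theorem transport_nonpos (hσ : 0 < σ) (hu : Continuous fun p : ℝ × ℝ => u p.1 p.2)
    (hux : ∀ x ∈ Icc (0:ℝ) 1, ∀ t, 1 - x ≤ σ * t → HasDerivAt (u · t) (ux x t) x)
    (hut : ∀ x ∈ Icc (0:ℝ) 1, ∀ t, 1 - x ≤ σ * t → HasDerivAt (u x ·) (σ * ux x t) t)
    (hb : ∀ t ≥ 0, u 1 t = 0) : ∀ x ∈ Icc (0:ℝ) 1, ∀ t, 1 - x < σ * t → u x t ≤ 0 := by
  intro x hx t hxt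
  have ht : 0 < t := pos_of_mul_pos_right (by linarith [hx.2]) hσ.le
  obtain ⟨C, hC⟩ := (isCompact_Icc.prod (isCompact_Icc (a := 0) (b := t)))
    |>.exists_bound_of_continuousOn hu.continuousOn
  have huM : ∀ y ∈ Icc (0:ℝ) 1, ∀ s ∈ Icc 0 t, u y s ≤ max C 1 := fun y hy s hs =>
    (le_abs_self _).trans ((hC (y, s) ⟨hy, hs⟩).trans (le_max_left _ _))
  obtain ⟨c, hxc, hcσ⟩ := exists_between ((div_lt_iff₀ ht).mpr hxt)
  have hneg : 1 - x - c * t < 0 := by linarith [(div_lt_iff₀ ht).mp hxc]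
  have hlim : Tendsto (fun K => max C 1 * exp (K * (1 - x - c * t))) atTop (𝓝 0) := by
    simpa using
      (tendsto_exp_atBot.comp (tendsto_id.atTop_mul_const_of_neg hneg)).const_mul (max C 1)
  refine ge_of_tendsto hlim ?_
  filter_upwards [eventually_gt_atTop 0] with K hK
  exact transport_le_barrier hu hux hut hb hcσ hK (by positivity) huM x hx t ⟨ht.le, le_rfl⟩ hxt.le

theorem transport_eq_zero (hσ : 0 < σ) (hu : Continuous fun p : ℝ × ℝ => u p.1 p.2)
    (hux : ∀ x ∈ Icc (0:ℝ) 1, ∀ t, 1 - x ≤ σ * t → HasDerivAt (u · t) (ux x t) x)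
    (hut : ∀ x ∈ Icc (0:ℝ) 1, ∀ t, 1 - x ≤ σ * t → HasDerivAt (u x ·) (σ * ux x t) t)
    (hb : ∀ t ≥ 0, u 1 t = 0) : ∀ x ∈ Icc (0:ℝ) 1, ∀ t, 1 - x ≤ σ * t → u x t = 0 := by
  intro x hx
  have hlt : ∀ t, 1 - x < σ * t → u x t = 0 := fun t hxt =>
    le_antisymm (transport_nonpos hσ hu hux hut hb x hx t hxt) <| neg_nonpos.mp <|
      transport_nonpos (u := fun y s => -u y s) (ux := fun y s => -ux y s) hσ hu.neg
        (fun y hy s hys => (hux y hy s hys).neg)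
        (fun y hy s hys => (hut y hy s hys).neg.congr_deriv (mul_neg _ _).symm)
        (fun s hs => by simp [hb s hs]) x hx t hxt
  have hclosed : IsClosed {t | u x t = 0} := isClosed_eq (by fun_prop) continuous_const
  have hIci : Ici ((1 - x) / σ) ⊆ {t | u x t = 0} := by
    rw [← closure_Ioi, hclosed.closure_subset_iff]
    intro t ht
    exact hlt t (by rwa [mem_Ioi, div_lt_iff₀' hσ] at ht)
  intro t hxt
  exact hIci (by rwa [mem_Ici, div_le_iff₀' hσ])

end Transport

theorem cascade_eq_zero {ι : Type*} [Fintype ι] [LinearOrder ι] {σ : ι → ℝ}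
    (hpos : ∀ i, 0 < σ i) (hanti : Antitone σ) {ω : ι → ι → ℝ → ℝ} {ρ ρx : ι → ℝ → ℝ → ℝ}
    (hcont : ∀ i, Continuous (fun p : ℝ × ℝ => ρ i p.1 p.2))
    (hx : ∀ i, ∀ x ∈ Icc (0:ℝ) 1, ∀ t ≥ (0:ℝ), HasDerivAt (fun x' => ρ i x' t) (ρx i x t) x)
    (ht : ∀ i, ∀ x ∈ Icc (0:ℝ) 1, ∀ t ≥ (0:ℝ), HasDerivAt (fun t' => ρ i x t')
      (σ i * ρx i x t + ∑ j ∈ Finset.univ.filter (fun j => j < i), ω i j x * ρ j x t) t)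
    (hbc : ∀ i, ∀ t ≥ (0:ℝ), ρ i 1 t = 0) (i : ι) :
    ∀ x ∈ Icc (0:ℝ) 1, ∀ t, 1 - x ≤ σ i * t → ρ i x t = 0 := by
  induction i using WellFoundedLT.induction with
  | _ i ih =>
  have hnonneg : ∀ x ∈ Icc (0:ℝ) 1, ∀ t, 1 - x ≤ σ i * t → 0 ≤ t := fun x hx t hxt =>
    nonneg_of_mul_nonneg_right (by linarith [hx.2]) (hpos i)
  have hsource : ∀ x ∈ Icc (0:ℝ) 1, ∀ t, 1 - x ≤ σ i * t →
      ∑ j ∈ Finset.univ.filter (fun j => j < i), ω i j x * ρ j x t = 0 := by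
    intro x hx t hxt
    refine Finset.sum_eq_zero fun j hj => ?_
    have hji : j < i := (Finset.mem_filter.mp hj).2
    rw [ih j hji x hx t (hxt.trans (mul_le_mul_of_nonneg_right (hanti hji.le)
      (hnonneg x hx t hxt))), mul_zero]
  refine transport_eq_zero (hpos i) (hcont i)
    (fun x hx₀₁ t hxt => hx i x hx₀₁ t (hnonneg x hx₀₁ t hxt)) (fun x hx₀₁ t hxt => ?_) (hbc i)
  simpa [hsource x hx₀₁ t hxt] using ht i x hx₀₁ t (hnonneg x hx₀₁ t hxt)

/-- Lower-triangular transport cascade `ρ_{i,t} = σ_i ρ_{i,x} +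
Σ_{j<i} ω_{i,j}(x) ρ_j` on `[0,1]` with `ρ_i(1,t) = 0` and
`σ₁ > σ₂ > ⋯ > σ_m > 0`: every component vanishes identically for
`t ≥ 1/σ_m`. -/
theorem stmt4 (m : ℕ) (hm : 0 < m) (σ : Fin m → ℝ)
    (hpos : ∀ i, 0 < σ i) (hdec : ∀ i j : Fin m, i < j → σ j < σ i)
    (ω : Fin m → Fin m → ℝ → ℝ)
    (ρ ρx : Fin m → ℝ → ℝ → ℝ)
    (hcont : ∀ i, Continuous (fun p : ℝ × ℝ => ρ i p.1 p.2))
    (hx : ∀ i, ∀ x ∈ Icc (0:ℝ) 1, ∀ t ≥ (0:ℝ),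
        HasDerivAt (fun x' => ρ i x' t) (ρx i x t) x)
    (ht : ∀ i, ∀ x ∈ Icc (0:ℝ) 1, ∀ t ≥ (0:ℝ),
        HasDerivAt (fun t' => ρ i x t')
          (σ i * ρx i x t +
            ∑ j ∈ Finset.univ.filter (fun j => j < i), ω i j x * ρ j x t) t)
    (hbc : ∀ i, ∀ t ≥ (0:ℝ), ρ i 1 t = 0) :
    ∀ i, ∀ t ≥ 1 / σ ⟨m - 1, by omega⟩, ∀ x ∈ Icc (0:ℝ) 1, ρ i x t = 0 := by
  have hanti : Antitone σ := StrictAnti.antitone fun i j hij => hdec i j hij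
  intro i t hlast x hx₀₁
  refine cascade_eq_zero hpos hanti hcont hx ht hbc i x hx₀₁ t ?_
  have hi : i ≤ ⟨m - 1, by omega⟩ := Fin.le_def.mpr (Nat.le_sub_one_of_lt i.isLt)
  have ht₀ : 0 ≤ t := le_trans (by have := hpos ⟨m - 1, by omega⟩; positivity) hlast
  rw [ge_iff_le, div_le_iff₀ (hpos _)] at hlast
  nlinarith [mul_le_mul_of_nonneg_right (hanti hi) ht₀, hx₀₁.1]
end

section
/- Let Ω : [0,1] → ℝ^{m×m} be continuous with Ω(x) strictly lower triangular for every x, and let Σ = diag(σ₁,...,σ_m) with all σ_i > 0. Consider the system ρ_t = Σρ_x + Ω(x)ρ on [0,1] with ρ(1,t) = 0, and the functional V(t) = ∫₀¹ e^{δx} ρ(x,t)ᵀ Σ⁻¹ ρ(x,t) dx. Then for δ > 2 max_x ‖Σ⁻¹Ω(x)‖ + c'·max_i(1/σ_i), one has V̇(t) ≤ -c' V(t), hence V decays exponentially at rate c'. -/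
open MeasureTheory Matrix Set

private lemma continuous_mulVec_aux {α : Type*} [TopologicalSpace α] {m : ℕ}
    {A : α → Matrix (Fin m) (Fin m) ℝ} {v : α → Fin m → ℝ}
    (hA : Continuous A) (hv : Continuous v) :
    Continuous fun x => (A x).mulVec (v x) := by
  refine continuous_pi fun i => ?_
  simp only [Matrix.mulVec, dotProduct]
  exact continuous_finset_sum _ fun j _ =>
    (((continuous_apply j).comp ((continuous_apply i).comp hA)).mul
      ((continuous_apply j).comp hv))

private lemma cs_aux {m : ℕ} (v w : Fin m → ℝ) (M : ℝ) (hM : 0 ≤ M)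
    (h : ∑ i, (w i) ^ 2 ≤ M ^ 2 * ∑ i, (v i) ^ 2) :
    ∑ i, v i * w i ≤ M * ∑ i, (v i) ^ 2 := by
  have hv : (0:ℝ) ≤ ∑ i, (v i) ^ 2 := Finset.sum_nonneg fun i _ => sq_nonneg _
  have h1 : (∑ i, v i * w i) ^ 2 ≤ (∑ i, (v i) ^ 2) * ∑ i, (w i) ^ 2 :=
    Finset.sum_mul_sq_le_sq_mul_sq _ _ _
  have h2 : (∑ i, v i * w i) ^ 2 ≤ (M * ∑ i, (v i) ^ 2) ^ 2 := by
    calc (∑ i, v i * w i) ^ 2 ≤ (∑ i, (v i) ^ 2) * ∑ i, (w i) ^ 2 := h1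
      _ ≤ (∑ i, (v i) ^ 2) * (M ^ 2 * ∑ i, (v i) ^ 2) :=
          mul_le_mul_of_nonneg_left h hv
      _ = (M * ∑ i, (v i) ^ 2) ^ 2 := by ring
  calc ∑ i, v i * w i ≤ |∑ i, v i * w i| := le_abs_self _
    _ = Real.sqrt ((∑ i, v i * w i) ^ 2) := (Real.sqrt_sq_eq_abs _).symm
    _ ≤ Real.sqrt ((M * ∑ i, (v i) ^ 2) ^ 2) := Real.sqrt_le_sqrt h2
    _ = |M * ∑ i, (v i) ^ 2| := Real.sqrt_sq_eq_abs _
    _ = M * ∑ i, (v i) ^ 2 := abs_of_nonneg (mul_nonneg hM hv)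

/-- For the lower-triangular transport cascade
`ρ_t = Σρ_x + Ω(x)ρ` on `[0,1]` with `ρ(1,t) = 0`, `Σ = diag(σ₁,…,σ_m)`,
`σ_i > 0`, `Ω(x)` strictly lower triangular, the Lyapunov functional
`V(t) = ∫₀¹ e^{δx} ρᵀ Σ⁻¹ ρ dx` satisfies `V̇ ≤ -c'V` provided
`δ > 2 max_x ‖Σ⁻¹Ω(x)‖ + c'·max_i (1/σ_i)`; hence `V` decays at rate `c'`. -/
theorem stmt19 (m : ℕ) (σ : Fin m → ℝ) (hσ : ∀ i, 0 < σ i)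
    (Ω : ℝ → Matrix (Fin m) (Fin m) ℝ) (hΩc : Continuous Ω)
    (hΩlt : ∀ x, ∀ i j : Fin m, ¬ j < i → Ω x i j = 0)
    (c' δ MΩ : ℝ) (hc' : 0 < c') (hMΩ : 0 ≤ MΩ)
    -- `MΩ` bounds the (Euclidean) operator norm of `Σ⁻¹Ω(x)` on `[0,1]`
    (hMbound : ∀ x ∈ Icc (0:ℝ) 1, ∀ v : Fin m → ℝ,
      ∑ i, (((Matrix.diagonal σ)⁻¹ * Ω x).mulVec v i) ^ 2 ≤ MΩ ^ 2 * ∑ i, (v i) ^ 2)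
    (hδ : ∀ i, 2 * MΩ + c' / σ i < δ)
    (ρ ρx : ℝ → ℝ → Fin m → ℝ)
    (hcont : Continuous (fun p : ℝ × ℝ => ρ p.1 p.2))
    (hcontx : Continuous (fun p : ℝ × ℝ => ρx p.1 p.2))
    (hx : ∀ t ≥ (0:ℝ), ∀ x ∈ Icc (0:ℝ) 1,
      HasDerivAt (fun x' => ρ x' t) (ρx x t) x)
    (ht : ∀ t ≥ (0:ℝ), ∀ x ∈ Icc (0:ℝ) 1,
      HasDerivAt (fun t' => ρ x t')
        ((Matrix.diagonal σ).mulVec (ρx x t) + (Ω x).mulVec (ρ x t)) t)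
    (hbc : ∀ t ≥ (0:ℝ), ρ 1 t = 0)
    (V : ℝ → ℝ)
    (hV : ∀ t, V t = ∫ x in (0:ℝ)..1, Real.exp (δ * x) * ∑ i, (ρ x t i) ^ 2 / σ i) :
    ∀ t ≥ (0:ℝ), ∀ d : ℝ, HasDerivAt V d t → d ≤ -c' * V t := by
  intro t₀ ht₀ d hd
  have hσ' : ∀ i, σ i ≠ 0 := fun i => (hσ i).ne'
  -- extended solution
  set g : ℝ → Fin m → ℝ :=
    fun x => (Matrix.diagonal σ).mulVec (ρx x 0) + (Ω x).mulVec (ρ x 0) with hgdef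
  set ρh : ℝ → ℝ → Fin m → ℝ := fun x t => ρ x (max t 0) + (min t 0) • g x with hρhdef
  set gh : ℝ → ℝ → Fin m → ℝ :=
    fun x t => (Matrix.diagonal σ).mulVec (ρx x (max t 0)) + (Ω x).mulVec (ρ x (max t 0))
    with hghdef
  set F : ℝ → ℝ → ℝ := fun t x => Real.exp (δ * x) * ∑ i, (ρh x t i) ^ 2 / σ i with hFdef
  set G : ℝ → ℝ → ℝ :=
    fun t x => Real.exp (δ * x) * ∑ i, 2 * ρh x t i * gh x t i / σ i with hGdef
  -- continuity of everything
  have hρc1 : ∀ t : ℝ, Continuous fun x => ρ x t := fun t =>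
    hcont.comp (continuous_id.prodMk continuous_const)
  have hρxc1 : ∀ t : ℝ, Continuous fun x => ρx x t := fun t =>
    hcontx.comp (continuous_id.prodMk continuous_const)
  have hgc : Continuous g := by
    exact (continuous_mulVec_aux continuous_const (hρxc1 0)).add
      (continuous_mulVec_aux hΩc (hρc1 0))
  have hρhc : Continuous fun p : ℝ × ℝ => ρh p.1 p.2 := by
    refine Continuous.add ?_ ?_
    · exact hcont.comp (continuous_fst.prodMk (continuous_snd.max continuous_const))
    · exact (continuous_snd.min continuous_const).smul (hgc.comp continuous_fst)
  have hghc : Continuous fun p : ℝ × ℝ => gh p.1 p.2 := by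
    refine Continuous.add ?_ ?_
    · exact continuous_mulVec_aux continuous_const
        (hcontx.comp (continuous_fst.prodMk (continuous_snd.max continuous_const)))
    · exact continuous_mulVec_aux (hΩc.comp continuous_fst)
        (hcont.comp (continuous_fst.prodMk (continuous_snd.max continuous_const)))
  have hGc : Continuous fun p : ℝ × ℝ => G p.1 p.2 := by
    refine Continuous.mul ?_ ?_
    · exact Real.continuous_exp.comp (continuous_const.mul continuous_snd)
    · refine continuous_finset_sum _ fun i _ => Continuous.div_const ?_ _
      exact ((continuous_const.mul ((continuous_apply i).comp
        (hρhc.comp continuous_swap))).mul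
        ((continuous_apply i).comp (hghc.comp continuous_swap)))
  have hFc : Continuous fun p : ℝ × ℝ => F p.1 p.2 := by
    refine Continuous.mul ?_ ?_
    · exact Real.continuous_exp.comp (continuous_const.mul continuous_snd)
    · refine continuous_finset_sum _ fun i _ => Continuous.div_const ?_ _
      exact (((continuous_apply i).comp (hρhc.comp continuous_swap)).pow 2)
  -- ρh is differentiable in t with derivative gh
  have hdiff : ∀ x ∈ Icc (0:ℝ) 1, ∀ t : ℝ,
      HasDerivAt (fun t' => ρh x t') (gh x t) t := by
    intro x hx1 t
    have hlin : ∀ s : ℝ, HasDerivAt (fun t' : ℝ => ρ x 0 + t' • g x) (g x) s := by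
      intro s
      simpa using ((hasDerivAt_id s).smul_const (g x)).const_add (ρ x 0)
    rcases lt_trichotomy t 0 with h | h | h
    · have hev : (fun t' => ρ x 0 + t' • g x) =ᶠ[nhds t] fun t' => ρh x t' := by
        filter_upwards [eventually_lt_nhds h] with t' ht'
        simp [hρhdef, max_eq_right ht'.le, min_eq_left ht'.le]
      have : HasDerivAt (fun t' => ρh x t') (g x) t := (hlin t).congr_of_eventuallyEq hev.symm
      simpa [hghdef, max_eq_right h.le, hgdef] using this
    · subst h
      have hright : HasDerivWithinAt (fun t' => ρh x t') (g x) (Ici (0:ℝ)) 0 := by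
        have := (ht 0 le_rfl x hx1).hasDerivWithinAt (s := Ici (0:ℝ))
        refine this.congr (fun y hy => ?_) (by simp [hρhdef])
        simp [hρhdef, max_eq_left (mem_Ici.mp hy), min_eq_right (mem_Ici.mp hy), hgdef]
      have hleft : HasDerivWithinAt (fun t' => ρh x t') (g x) (Iic (0:ℝ)) 0 := by
        refine ((hlin 0).hasDerivWithinAt (s := Iic (0:ℝ))).congr (fun y hy => ?_)
          (by simp [hρhdef])
        simp [hρhdef, max_eq_right (mem_Iic.mp hy), min_eq_left (mem_Iic.mp hy)]
      have := hleft.union hright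
      rw [Iic_union_Ici] at this
      have h2 := this.hasDerivAt (by simp)
      simpa [hghdef, hgdef] using h2
    · have hev : (fun t' => ρ x t') =ᶠ[nhds t] fun t' => ρh x t' := by
        filter_upwards [eventually_gt_nhds h] with t' ht'
        simp [hρhdef, max_eq_left ht'.le, min_eq_right ht'.le]
      have := (ht t h.le x hx1).congr_of_eventuallyEq hev.symm
      simpa [hghdef, max_eq_left h.le] using this
  -- F is differentiable in t with derivative G
  have hFderiv : ∀ x ∈ Icc (0:ℝ) 1, ∀ t : ℝ,
      HasDerivAt (fun t' => F t' x) (G t x) t := by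
    intro x hx1 t
    have hsum : HasDerivAt (fun t' => ∑ i, (ρh x t' i) ^ 2 / σ i)
        (∑ i, 2 * ρh x t i * gh x t i / σ i) t := by
      refine HasDerivAt.fun_sum fun i _ => ?_
      have hi : HasDerivAt (fun t' => ρh x t' i) (gh x t i) t :=
        hasDerivAt_pi.mp (hdiff x hx1 t) i
      have := (hi.pow 2).div_const (σ i)
      simpa [pow_one, mul_comm, mul_assoc, mul_left_comm] using this
    simpa [hFdef, hGdef] using hsum.const_mul (Real.exp (δ * x))
  -- local bound for dominated convergence
  obtain ⟨C, hC⟩ : ∃ C, ∀ p ∈ Icc (t₀ - 1) (t₀ + 1) ×ˢ Icc (0:ℝ) 1,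
      ‖G p.1 p.2‖ ≤ C := by
    exact ((isCompact_Icc.prod isCompact_Icc).exists_bound_of_continuousOn hGc.continuousOn)
  -- differentiate under the integral sign
  have key := intervalIntegral.hasDerivAt_integral_of_dominated_loc_of_deriv_le
    (F := F) (F' := G) (x₀ := t₀) (a := (0:ℝ)) (b := 1) (μ := volume)
    (bound := fun _ => C) (s := Metric.ball t₀ 1) (Metric.ball_mem_nhds t₀ one_pos)
    (Filter.Eventually.of_forall fun t =>
      (hFc.comp (Continuous.prodMk_right t)).aestronglyMeasurable)
    ((hFc.comp (Continuous.prodMk_right t₀)).intervalIntegrable 0 1)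
    (hGc.comp (Continuous.prodMk_right t₀)).aestronglyMeasurable
    (Filter.Eventually.of_forall fun x hxI t htb => by
      refine hC (t, x) ?_
      constructor
      · have := Metric.mem_ball.mp htb
        rw [Real.dist_eq] at this
        constructor <;> linarith [abs_lt.mp this |>.1, abs_lt.mp this |>.2]
      · exact ⟨(uIoc_of_le (by norm_num : (0:ℝ) ≤ 1) ▸ hxI).1.le,
          (uIoc_of_le (by norm_num : (0:ℝ) ≤ 1) ▸ hxI).2⟩)
    (intervalIntegrable_const)
    (Filter.Eventually.of_forall fun x hxI t _ => by
      refine hFderiv x ?_ t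
      have := uIoc_of_le (by norm_num : (0:ℝ) ≤ 1) ▸ hxI
      exact ⟨this.1.le, this.2⟩)
  obtain ⟨-, hW⟩ := key
  set D : ℝ := ∫ x in (0:ℝ)..1, G t₀ x with hDdef
  -- identify d with D
  have hWV : ∀ t ∈ Ici t₀, V t = ∫ x in (0:ℝ)..1, F t x := by
    intro t htt
    have ht0 : (0:ℝ) ≤ t := le_trans ht₀ htt
    rw [hV t]
    refine intervalIntegral.integral_congr fun x _ => ?_
    simp [hFdef, hρhdef, max_eq_left ht0, min_eq_right ht0]
  have hdD : d = D := by
    have h1 : HasDerivWithinAt V D (Ici t₀) t₀ :=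
      (hW.hasDerivWithinAt).congr (fun y hy => hWV y hy) (hWV t₀ self_mem_Ici)
    have h2 : HasDerivWithinAt V d (Ici t₀) t₀ := hd.hasDerivWithinAt
    have u := uniqueDiffOn_Ici t₀ t₀ self_mem_Ici
    rw [← h2.derivWithin u, h1.derivWithin u]
  -- ===== estimation of D =====
  have hrc : Continuous fun x => ρ x t₀ := hρc1 t₀
  have hrxc : Continuous fun x => ρx x t₀ := hρxc1 t₀
  set S : ℝ → ℝ := fun x => ∑ i, (ρ x t₀ i) ^ 2 with hSdef
  set ES : ℝ → ℝ := fun x => Real.exp (δ * x) * S x with hESdef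
  set P : ℝ → ℝ := fun x => Real.exp (δ * x) * ∑ i, 2 * ρ x t₀ i * ρx x t₀ i with hPdef
  set Q : ℝ → ℝ :=
    fun x => Real.exp (δ * x) * ∑ i, 2 * ρ x t₀ i * ((Ω x).mulVec (ρ x t₀) i) / σ i with hQdef
  set Vd : ℝ → ℝ := fun x => Real.exp (δ * x) * ∑ i, (ρ x t₀ i) ^ 2 / σ i with hVddef
  have hexpc : Continuous fun x : ℝ => Real.exp (δ * x) :=
    Real.continuous_exp.comp (continuous_const.mul continuous_id)
  have hSc : Continuous S := continuous_finset_sum _ fun i _ => ((continuous_apply i).comp hrc).pow 2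
  have hESc : Continuous ES := hexpc.mul hSc
  have hPc : Continuous P := hexpc.mul (continuous_finset_sum _ fun i _ =>
    (continuous_const.mul ((continuous_apply i).comp hrc)).mul ((continuous_apply i).comp hrxc))
  have hQc : Continuous Q := hexpc.mul (continuous_finset_sum _ fun i _ =>
    Continuous.div_const ((continuous_const.mul ((continuous_apply i).comp hrc)).mul
      ((continuous_apply i).comp (continuous_mulVec_aux hΩc hrc))) _)
  have hVdc : Continuous Vd := hexpc.mul (continuous_finset_sum _ fun i _ =>
    Continuous.div_const (((continuous_apply i).comp hrc).pow 2) _)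
  -- split G t₀ = P + Q
  have hGPQ : ∀ x, G t₀ x = P x + Q x := by
    intro x
    have hre : ρh x t₀ = ρ x t₀ := by
      simp [hρhdef, max_eq_left ht₀, min_eq_right ht₀]
    have hgh : gh x t₀ = (Matrix.diagonal σ).mulVec (ρx x t₀) + (Ω x).mulVec (ρ x t₀) := by
      simp [hghdef, max_eq_left ht₀]
    have h1 : ∀ i : Fin m, 2 * ρh x t₀ i * gh x t₀ i / σ i
        = 2 * ρ x t₀ i * ρx x t₀ i + 2 * ρ x t₀ i * ((Ω x).mulVec (ρ x t₀) i) / σ i := by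
      intro i
      rw [hre, hgh]
      simp only [Pi.add_apply, Matrix.mulVec_diagonal]
      field_simp [hσ' i]
    simp only [hGdef, hPdef, hQdef]
    rw [Finset.sum_congr rfl fun i _ => h1 i, Finset.sum_add_distrib, mul_add]
  -- fundamental theorem of calculus / integration by parts
  have hES' : ∀ x ∈ uIcc (0:ℝ) 1, HasDerivAt ES (δ * Real.exp (δ * x) * S x + P x) x := by
    intro x hx1
    rw [uIcc_of_le (by norm_num : (0:ℝ) ≤ 1)] at hx1
    have hSd : HasDerivAt S (∑ i, 2 * ρ x t₀ i * ρx x t₀ i) x := by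
      refine HasDerivAt.fun_sum fun i _ => ?_
      have hi : HasDerivAt (fun x' => ρ x' t₀ i) (ρx x t₀ i) x :=
        hasDerivAt_pi.mp (hx t₀ ht₀ x hx1) i
      simpa [pow_one, mul_comm, mul_assoc, mul_left_comm] using hi.fun_pow 2
    have hed : HasDerivAt (fun x' : ℝ => Real.exp (δ * x')) (Real.exp (δ * x) * δ) x := by
      simpa using ((hasDerivAt_id x).const_mul δ).exp
    have hprod := hed.fun_mul hSd
    have : HasDerivAt ES (Real.exp (δ * x) * δ * S x
        + Real.exp (δ * x) * ∑ i, 2 * ρ x t₀ i * ρx x t₀ i) x := by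
      simpa [hESdef] using hprod
    convert this using 1
    simp only [hPdef]
    ring
  have hintA : IntervalIntegrable (fun x => δ * Real.exp (δ * x) * S x) volume 0 1 :=
    ((continuous_const.mul hexpc).mul hSc).intervalIntegrable 0 1
  have hintP : IntervalIntegrable P volume 0 1 := hPc.intervalIntegrable 0 1
  have hintQ : IntervalIntegrable Q volume 0 1 := hQc.intervalIntegrable 0 1
  have hintES : IntervalIntegrable ES volume 0 1 := hESc.intervalIntegrable 0 1
  have hftc : ∫ x in (0:ℝ)..1, (δ * Real.exp (δ * x) * S x + P x) = ES 1 - ES 0 :=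
    intervalIntegral.integral_eq_sub_of_hasDerivAt hES' (hintA.add hintP)
  have hES1 : ES 1 = 0 := by
    simp [hESdef, hSdef, hbc t₀ ht₀]
  have hES0 : 0 ≤ ES 0 :=
    mul_nonneg (Real.exp_nonneg _) (Finset.sum_nonneg fun i _ => sq_nonneg _)
  have hIA : ∫ x in (0:ℝ)..1, δ * Real.exp (δ * x) * S x = δ * ∫ x in (0:ℝ)..1, ES x := by
    rw [← intervalIntegral.integral_const_mul]
    refine intervalIntegral.integral_congr fun x _ => ?_
    simp only [hESdef]
    ring
  have hIP : ∫ x in (0:ℝ)..1, P x = (ES 1 - ES 0) - δ * ∫ x in (0:ℝ)..1, ES x := by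
    rw [← hftc, intervalIntegral.integral_add hintA hintP, hIA]
    ring
  -- inverse of the diagonal matrix
  have hinv : (Matrix.diagonal σ)⁻¹ = Matrix.diagonal (fun i => (σ i)⁻¹) := by
    apply Matrix.inv_eq_right_inv
    rw [Matrix.diagonal_mul_diagonal]
    have : (fun i => σ i * (σ i)⁻¹) = fun _ : Fin m => (1:ℝ) := by
      funext i; exact mul_inv_cancel₀ (hσ' i)
    rw [this, Matrix.diagonal_one]
  -- bound on the coupling term
  have hQle : ∀ x ∈ Icc (0:ℝ) 1, Q x ≤ 2 * MΩ * ES x := by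
    intro x hx1
    have hw : ∀ i, (Ω x).mulVec (ρ x t₀) i / σ i
        = ((Matrix.diagonal σ)⁻¹ * Ω x).mulVec (ρ x t₀) i := by
      intro i
      rw [← Matrix.mulVec_mulVec, hinv, Matrix.mulVec_diagonal]
      rw [div_eq_inv_mul]
    have hM2 : ∑ i, ((Ω x).mulVec (ρ x t₀) i / σ i) ^ 2 ≤ MΩ ^ 2 * ∑ i, (ρ x t₀ i) ^ 2 := by
      calc ∑ i, ((Ω x).mulVec (ρ x t₀) i / σ i) ^ 2
          = ∑ i, (((Matrix.diagonal σ)⁻¹ * Ω x).mulVec (ρ x t₀) i) ^ 2 :=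
            Finset.sum_congr rfl fun i _ => by rw [hw]
        _ ≤ MΩ ^ 2 * ∑ i, (ρ x t₀ i) ^ 2 := hMbound x hx1 (ρ x t₀)
    have hcs := cs_aux (ρ x t₀) (fun i => (Ω x).mulVec (ρ x t₀) i / σ i) MΩ hMΩ hM2
    have hsum : ∑ i, 2 * ρ x t₀ i * ((Ω x).mulVec (ρ x t₀) i) / σ i
        = 2 * ∑ i, ρ x t₀ i * ((Ω x).mulVec (ρ x t₀) i / σ i) := by
      rw [Finset.mul_sum]
      exact Finset.sum_congr rfl fun i _ => by ring
    have h2 : ∑ i, 2 * ρ x t₀ i * ((Ω x).mulVec (ρ x t₀) i) / σ i ≤ 2 * MΩ * S x := by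
      rw [hsum, hSdef]
      nlinarith [hcs]
    calc Q x = Real.exp (δ * x) * ∑ i, 2 * ρ x t₀ i * ((Ω x).mulVec (ρ x t₀) i) / σ i := by
          simp only [hQdef]
      _ ≤ Real.exp (δ * x) * (2 * MΩ * S x) :=
          mul_le_mul_of_nonneg_left h2 (Real.exp_nonneg _)
      _ = 2 * MΩ * ES x := by simp only [hESdef]; ring
  have hIQ : ∫ x in (0:ℝ)..1, Q x ≤ 2 * MΩ * ∫ x in (0:ℝ)..1, ES x := by
    rw [← intervalIntegral.integral_const_mul]
    exact intervalIntegral.integral_mono_on (by norm_num) hintQ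
      ((continuous_const.mul hESc).intervalIntegrable 0 1) hQle
  -- D = ∫ P + ∫ Q
  have hDsplit : D = (∫ x in (0:ℝ)..1, P x) + ∫ x in (0:ℝ)..1, Q x := by
    rw [hDdef, ← intervalIntegral.integral_add hintP hintQ]
    exact intervalIntegral.integral_congr fun x _ => hGPQ x
  -- relate V t₀ to ∫ ES
  have hVt : V t₀ = ∫ x in (0:ℝ)..1, Vd x := by rw [hV t₀]
  have hmono2 : c' * ∫ x in (0:ℝ)..1, Vd x ≤ (δ - 2 * MΩ) * ∫ x in (0:ℝ)..1, ES x := by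
    rw [← intervalIntegral.integral_const_mul, ← intervalIntegral.integral_const_mul]
    refine intervalIntegral.integral_mono_on (by norm_num)
      ((continuous_const.mul hVdc).intervalIntegrable 0 1)
      ((continuous_const.mul hESc).intervalIntegrable 0 1) fun x hx1 => ?_
    have hsum : c' * ∑ i, (ρ x t₀ i) ^ 2 / σ i ≤ (δ - 2 * MΩ) * S x := by
      simp only [hSdef]
      rw [Finset.mul_sum, Finset.mul_sum]
      refine Finset.sum_le_sum fun i _ => ?_
      have h1 : c' / σ i ≤ δ - 2 * MΩ := by linarith [hδ i]
      have h2 : c' * ((ρ x t₀ i) ^ 2 / σ i) = c' / σ i * (ρ x t₀ i) ^ 2 := by ring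
      rw [h2]
      exact mul_le_mul_of_nonneg_right h1 (sq_nonneg _)
    calc c' * Vd x = Real.exp (δ * x) * (c' * ∑ i, (ρ x t₀ i) ^ 2 / σ i) := by
          simp only [hVddef]; ring
      _ ≤ Real.exp (δ * x) * ((δ - 2 * MΩ) * S x) :=
          mul_le_mul_of_nonneg_left hsum (Real.exp_nonneg _)
      _ = (δ - 2 * MΩ) * ES x := by simp only [hESdef]; ring
  -- conclude
  have hIES : 0 ≤ ∫ x in (0:ℝ)..1, ES x := by
    refine intervalIntegral.integral_nonneg (by norm_num) fun x _ => ?_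
    exact mul_nonneg (Real.exp_nonneg _) (Finset.sum_nonneg fun i _ => sq_nonneg _)
  rw [hdD, hDsplit, hVt]
  linarith [hIP, hIQ, hmono2, hES0, hES1]
end
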